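/- arXiv:1701.08602 — 4 statements merged into one kernel-verified Lean document; each statement's English description precedes it below -/
import Mathlib

section
/- For every n, k ∈ ℕ and 0 < p < 1, there exists a constant c = c(n,k,p) > 0 such that for every finite Borel measure μ on ℝⁿ and every γ > 0, for μ-almost every x ∈ ℝⁿ one has liminf_{l→∞} (1/l) · #{ j ∈ {1,…,l} : μ(B(x, γ k^{-j})) ≥ c · μ(B(x, γ k^{-j+1})) } ≥ p. (In fact c = k^{-2n/(1-p)} works.) -/
/-!
At μ-almost every point `x`, Besicovitch differentiation of Lebesgue measure with respect to `μ`
gives `μ (B(x, r)) ≥ D rⁿ` for small `r`, so `μ (B(x, γ k^{-l})) ≥ D' k^{-nl}` for large `l`.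
A non-doubling scale shrinks the mass by a factor `c`, hence after `l` scales of which `b` are
non-doubling the mass is at most `cᵇ μ(B(x, γ))`. Comparing the two bounds gives
`b ≤ (n log k / log c⁻¹) l + O(1)`, and `c = (k + 1)^{-(n+1)/(1-p)}` makes the slope at most
`1 - p`.
-/

open MeasureTheory Metric Filter Set
open scoped Classical ENNReal Topology NNReal

lemma le_liminf_card_filter_div_of_card_filter_not_le {P : ℕ → Prop} [DecidablePred P] {A B : ℝ}
    (hbad : ∀ᶠ l in atTop, (((Finset.Icc 1 l).filter (¬P ·)).card : ℝ) ≤ A * l + B) :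
    1 - A ≤ liminf (fun l : ℕ => (((Finset.Icc 1 l).filter P).card : ℝ) / l) atTop := by
  have hlim : Tendsto (fun l : ℕ => 1 - A - B / l) atTop (𝓝 (1 - A)) := by
    simpa using tendsto_const_nhds.sub (tendsto_const_div_atTop_nhds_zero_nat B)
  have hle_one (l : ℕ) : (((Finset.Icc 1 l).filter P).card : ℝ) / l ≤ 1 :=
    div_le_one_of_le₀ (by exact_mod_cast (Finset.card_filter_le _ _).trans (by simp))
      l.cast_nonneg
  have hlower : ∀ᶠ l in atTop, 1 - A - B / l ≤ (((Finset.Icc 1 l).filter P).card : ℝ) / l := by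
    filter_upwards [hbad, eventually_ge_atTop 1] with l hl hl1
    have hsplit : (((Finset.Icc 1 l).filter P).card : ℝ) + ((Finset.Icc 1 l).filter (¬P ·)).card
        = l := by
      exact_mod_cast (Finset.card_filter_add_card_filter_not P).trans (by simp)
    have hl0 : (0 : ℝ) < l := by exact_mod_cast hl1
    rw [le_div_iff₀ hl0, sub_mul, sub_mul, div_mul_cancel₀ _ hl0.ne']
    linarith
  calc 1 - A = liminf (fun l : ℕ => 1 - A - B / l) atTop := hlim.liminf_eq.symm
    _ ≤ _ := liminf_le_liminf hlower hlim.isBoundedUnder_ge (isCoboundedUnder_ge_of_le _ hle_one)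

lemma le_pow_card_filter_not_mul {m : ℕ → ℝ≥0∞} (hm : Antitone m) {c : ℝ≥0∞} {P : ℕ → Prop}
    [DecidablePred P] (hbad : ∀ j, ¬P (j + 1) → m (j + 1) ≤ c * m j) (l : ℕ) :
    m l ≤ c ^ ((Finset.Icc 1 l).filter (¬P ·)).card * m 0 := by
  induction l with
  | zero => simp
  | succ l ih =>
    rw [← Finset.insert_Icc_right_eq_Icc_add_one (by omega), Finset.filter_insert]
    by_cases hP : P (l + 1)
    · rw [if_neg (not_not.mpr hP)]
      exact (hm l.le_succ).trans ih
    · rw [if_pos hP, Finset.card_insert_of_notMem (by simp), pow_succ', mul_assoc]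
      exact (hbad l hP).trans (by gcongr)

lemma natCast_le_of_mul_pow_le_pow_mul {a c D M : ℝ} {l b : ℕ} (ha : 0 < a) (hc0 : 0 < c)
    (hc1 : c < 1) (hD : 0 < D) (h : D * a ^ l ≤ c ^ b * M) :
    (b : ℝ) ≤ Real.log a / Real.log c * l + Real.log (D / M) / Real.log c := by
  have hM : 0 < M :=
    pos_of_mul_pos_right ((by positivity : 0 < D * a ^ l).trans_le h) (by positivity)
  have hlog := Real.log_le_log (by positivity) h
  rw [Real.log_mul hD.ne' (by positivity), Real.log_pow, Real.log_mul (by positivity) hM.ne',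
    Real.log_pow] at hlog
  rw [Real.log_div hD.ne' hM.ne', div_mul_eq_mul_div, ← add_div,
    le_div_iff_of_neg (Real.log_neg hc0 hc1)]
  linarith

theorem le_liminf_card_filter_div_of_ofReal_mul_pow_le {m : ℕ → ℝ≥0∞} (hm : Antitone m)
    (hm0 : m 0 ≠ ∞) {a c D : ℝ} (ha : 0 < a) (hc0 : 0 < c) (hc1 : c < 1) (hD : 0 < D)
    (hlow : ∀ᶠ l in atTop, ENNReal.ofReal (D * a ^ l) ≤ m l) {P : ℕ → Prop} [DecidablePred P]
    (hbad : ∀ j, ¬P (j + 1) → m (j + 1) ≤ ENNReal.ofReal c * m j) :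
    1 - Real.log a / Real.log c ≤
      liminf (fun l : ℕ => (((Finset.Icc 1 l).filter P).card : ℝ) / l) atTop := by
  refine le_liminf_card_filter_div_of_card_filter_not_le
    (B := Real.log (D / (m 0).toReal) / Real.log c) ?_
  filter_upwards [hlow] with l hl
  have hml : m l ≠ ∞ := ((hm l.zero_le).trans_lt hm0.lt_top).ne
  refine natCast_le_of_mul_pow_le_pow_mul ha hc0 hc1 hD ?_
  calc D * a ^ l ≤ (m l).toReal := (ENNReal.ofReal_le_iff_le_toReal hml).mp hl
    _ ≤ (ENNReal.ofReal c ^ ((Finset.Icc 1 l).filter (¬P ·)).card * m 0).toReal :=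
      ENNReal.toReal_mono (ENNReal.mul_ne_top (ENNReal.pow_ne_top ENNReal.ofReal_ne_top) hm0)
        (le_pow_card_filter_not_mul hm hbad l)
    _ = c ^ ((Finset.Icc 1 l).filter (¬P ·)).card * (m 0).toReal := by
      rw [ENNReal.toReal_mul, ENNReal.toReal_pow, ENNReal.toReal_ofReal hc0.le]

theorem ae_exists_eventually_measure_closedBall_le_mul {β : Type*} [MetricSpace β]
    [MeasurableSpace β] [BorelSpace β] [SecondCountableTopology β] [HasBesicovitchCovering β]
    (ρ μ : Measure β) [IsLocallyFiniteMeasure μ] [IsLocallyFiniteMeasure ρ] :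
    ∀ᵐ x ∂μ, ∃ C : ℝ≥0, ∀ᶠ r in 𝓝[>] 0, ρ (closedBall x r) ≤ C * μ (closedBall x r) := by
  filter_upwards [Besicovitch.ae_tendsto_rnDeriv ρ μ, Measure.rnDeriv_lt_top ρ μ] with x hx hfin
  lift ρ.rnDeriv μ x to ℝ≥0 using hfin.ne with L
  refine ⟨L + 1, ?_⟩
  filter_upwards [hx.eventually_lt_const (ENNReal.coe_lt_coe.mpr (lt_add_one L))] with r hr
  exact (ENNReal.div_le_iff_le_mul (Or.inr ENNReal.coe_ne_top) (Or.inr (by simp))).mp hr.le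

theorem ae_exists_eventually_ofReal_mul_pow_le_measure_closedBall {E : Type*}
    [NormedAddCommGroup E] [NormedSpace ℝ E] [FiniteDimensional ℝ E] [MeasurableSpace E]
    [BorelSpace E] (μ : Measure E) [IsLocallyFiniteMeasure μ] :
    ∀ᵐ x ∂μ, ∃ D > 0, ∀ᶠ r in 𝓝[>] 0,
      ENNReal.ofReal (D * r ^ Module.finrank ℝ E) ≤ μ (closedBall x r) := by
  filter_upwards [ae_exists_eventually_measure_closedBall_le_mul Measure.addHaar μ]
    with x ⟨C, hC⟩
  set v := (Measure.addHaar : Measure E) (ball 0 1)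
  have hv0 : v ≠ 0 := (measure_ball_pos _ _ one_pos).ne'
  have hv : v ≠ ∞ := measure_ball_lt_top.ne
  refine ⟨(v / (C + 1 : ℝ≥0)).toReal,
    ENNReal.toReal_pos (ENNReal.div_pos hv0 ENNReal.coe_ne_top).ne'
      (ENNReal.div_lt_top hv (by simp)).ne, ?_⟩
  filter_upwards [hC, self_mem_nhdsWithin] with r hr hr0
  rw [Measure.addHaar_closedBall _ _ (le_of_lt hr0)] at hr
  rw [ENNReal.ofReal_mul ENNReal.toReal_nonneg,
    ENNReal.ofReal_toReal (ENNReal.div_lt_top hv (by simp)).ne, mul_comm, ← mul_div_assoc]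
  refine ENNReal.div_le_of_le_mul (hr.trans ?_)
  rw [mul_comm]
  gcongr
  exact_mod_cast le_self_add

lemma tendsto_mul_zpow_neg_nhdsGT_zero {γ q : ℝ} (hγ : 0 < γ) (hq : 1 < q) :
    Tendsto (fun l : ℕ => γ * q ^ (-(l : ℤ))) atTop (𝓝[>] 0) := by
  have hq0 : 0 < q := zero_lt_one.trans hq
  simp_rw [zpow_neg, zpow_natCast, ← inv_pow]
  refine tendsto_nhdsWithin_iff.mpr ⟨?_, .of_forall fun l => mem_Ioi.mpr (by positivity)⟩
  simpa using (tendsto_pow_atTop_nhds_zero_of_lt_one (inv_nonneg.mpr hq0.le)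
    (inv_lt_one_of_one_lt₀ hq)).const_mul γ

theorem le_liminf_card_doubling_scales_div {α : Type*} [PseudoMetricSpace α] [MeasurableSpace α]
    (μ : Measure α) [IsFiniteMeasure μ] (x : α) {n k : ℕ} (hk : 1 < k) {γ c D : ℝ}
    (hγ : 0 < γ) (hc0 : 0 < c) (hc1 : c < 1) (hD : 0 < D)
    (hball : ∀ᶠ r in 𝓝[>] 0, ENNReal.ofReal (D * r ^ n) ≤ μ (closedBall x r)) :
    1 - n * Real.log k / Real.log c⁻¹ ≤
      liminf (fun l : ℕ =>
        (((Finset.Icc 1 l).filter (fun j : ℕ =>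
          ENNReal.ofReal c * μ (closedBall x (γ * (k : ℝ) ^ (-(j : ℤ) + 1)))
            ≤ μ (closedBall x (γ * (k : ℝ) ^ (-(j : ℤ)))))).card : ℝ) / (l : ℝ)) atTop := by
  have hk1 : (1 : ℝ) < k := by exact_mod_cast hk
  have hslope : n * Real.log k / Real.log c⁻¹ = Real.log ((k : ℝ) ^ n)⁻¹ / Real.log c := by
    rw [Real.log_inv, Real.log_inv, Real.log_pow, div_neg, neg_div]
  rw [hslope]
  refine le_liminf_card_filter_div_of_ofReal_mul_pow_le
    (m := fun l => μ (closedBall x (γ * (k : ℝ) ^ (-(l : ℤ))))) ?_ (measure_ne_top _ _)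
    (by positivity) hc0 hc1 (D := D * γ ^ n) (by positivity) ?_ ?_
  · exact fun i j hij => measure_mono (closedBall_subset_closedBall
      (mul_le_mul_of_nonneg_left (zpow_le_zpow_right₀ hk1.le (by omega)) hγ.le))
  · filter_upwards [(tendsto_mul_zpow_neg_nhdsGT_zero hγ hk1).eventually hball] with l hl
    convert hl using 2
    rw [zpow_neg, zpow_natCast]
    ring
  · intro j hj
    have hexp : -((j + 1 : ℕ) : ℤ) + 1 = -(j : ℤ) := by push_cast; ring
    rw [hexp] at hj
    exact (not_le.mp hj).le

/-- For `k = 0` both sides vanish, since `(0 : ℝ) ^ m = 0` for every `m ≠ 0`. -/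
lemma zpow_neg_add_one_eq_zpow_neg {k : ℕ} (hk : k ≤ 1) {j : ℕ} (hj : 2 ≤ j) :
    (k : ℝ) ^ (-(j : ℤ) + 1) = (k : ℝ) ^ (-(j : ℤ)) := by
  interval_cases k
  · rw [Nat.cast_zero, zero_zpow _ (by omega), zero_zpow _ (by omega)]
  · simp

lemma card_nondoubling_scales_le_one_of_le_one {α : Type*} [PseudoMetricSpace α]
    [MeasurableSpace α] (μ : Measure α) (x : α) {k : ℕ} (hk : k ≤ 1) {γ c : ℝ} (hc : c ≤ 1)
    (l : ℕ) :
    ((Finset.Icc 1 l).filter (fun j : ℕ =>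
      ¬ENNReal.ofReal c * μ (closedBall x (γ * (k : ℝ) ^ (-(j : ℤ) + 1)))
        ≤ μ (closedBall x (γ * (k : ℝ) ^ (-(j : ℤ)))))).card ≤ 1 := by
  refine (Finset.card_le_card (t := {1}) fun j hj => ?_).trans_eq (Finset.card_singleton 1)
  rw [Finset.mem_filter, Finset.mem_Icc] at hj
  rw [Finset.mem_singleton]
  by_contra hj1
  refine hj.2 ?_
  rw [zpow_neg_add_one_eq_zpow_neg hk (by omega)]
  exact mul_le_of_le_one_left zero_le (ENNReal.ofReal_le_one.mpr hc)

theorem stmt0_general (n k : ℕ) (p : ℝ) (hp1 : p < 1) :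
    ∃ c : ℝ, 0 < c ∧
      ∀ (μ : Measure (EuclideanSpace ℝ (Fin n))) [IsFiniteMeasure μ] (γ : ℝ), 0 < γ →
        ∀ᵐ x ∂μ, p ≤
          liminf (fun l : ℕ =>
            (((Finset.Icc 1 l).filter (fun j : ℕ =>
              ENNReal.ofReal c * μ (closedBall x (γ * (k : ℝ) ^ (-(j : ℤ) + 1)))
                ≤ μ (closedBall x (γ * (k : ℝ) ^ (-(j : ℤ)))))).card : ℝ) / (l : ℝ)) atTop := by
  have hq : 0 < 1 - p := by linarith
  set c : ℝ := ((k : ℝ) + 1) ^ (-((n + 1) / (1 - p)))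
  have hc0 : 0 < c := by positivity
  have hlogc : Real.log c⁻¹ = (n + 1) / (1 - p) * Real.log (k + 1) := by
    rw [Real.log_inv, Real.log_rpow (by positivity), neg_mul, neg_neg]
  refine ⟨c, hc0, fun μ _ γ hγ => ?_⟩
  rcases le_or_gt k 1 with hk | hk
  · have hc1 : c ≤ 1 := Real.rpow_le_one_of_one_le_of_nonpos
      (le_add_of_nonneg_left k.cast_nonneg) (neg_nonpos.mpr (by positivity))
    refine .of_forall fun x => le_trans (by linarith)
      (le_liminf_card_filter_div_of_card_filter_not_le (A := 0) (B := 1) (.of_forall fun l => ?_))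
    simpa using card_nondoubling_scales_le_one_of_le_one μ x hk hc1 l
  · have hk1 : (1 : ℝ) < k + 1 := by norm_cast; omega
    have hc1 : c < 1 := Real.rpow_lt_one_of_one_lt_of_neg hk1 (neg_lt_zero.mpr (by positivity))
    have hslope : n * Real.log k / Real.log c⁻¹ ≤ 1 - p := by
      have hlogk : 0 ≤ Real.log k := Real.log_nonneg (by exact_mod_cast hk.le)
      have hlogk1 : Real.log k ≤ Real.log (k + 1) := Real.log_le_log (by positivity) (by linarith)
      rw [hlogc, div_le_iff₀ (mul_pos (by positivity) (Real.log_pos hk1)), ← mul_assoc,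
        mul_div_cancel₀ _ hq.ne']
      nlinarith
    filter_upwards [ae_exists_eventually_ofReal_mul_pow_le_measure_closedBall μ]
      with x ⟨D, hD, hball⟩
    rw [finrank_euclideanSpace_fin] at hball
    exact le_trans (by linarith) (le_liminf_card_doubling_scales_div μ x hk hγ hc0 hc1 hD hball)

theorem stmt0 (n k : ℕ) (p : ℝ) (hp : 0 < p) (hp1 : p < 1) :
    ∃ c : ℝ, 0 < c ∧
      ∀ (μ : Measure (EuclideanSpace ℝ (Fin n))) [IsFiniteMeasure μ] (γ : ℝ), 0 < γ →
        ∀ᵐ x ∂μ, p ≤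
          liminf (fun l : ℕ =>
            (((Finset.Icc 1 l).filter (fun j : ℕ =>
              ENNReal.ofReal c * μ (closedBall x (γ * (k : ℝ) ^ (-(j : ℤ) + 1)))
                ≤ μ (closedBall x (γ * (k : ℝ) ^ (-(j : ℤ)))))).card : ℝ) / (l : ℝ)) atTop :=
  stmt0_general n k p hp1
end

section
/- For every n ∈ ℕ and 0 < α ≤ 1 there exists a constant c = c(n,α) > 0 such that for every finite Borel regular measure μ on ℝⁿ, for μ-almost every x ∈ ℝⁿ one has limsup_{r↓0} inf_{θ ∈ S^{n-1}} μ(B(x,r) \ H(x,θ,α)) / μ(B(x,r)) > c. -/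
open MeasureTheory Metric Filter Set
open scoped RealInnerProductSpace ENNReal

/-- The almost half-space `H(x,θ,α) = {y : (y-x)·θ > α|y-x|}`. -/
def almostHalfSpace {n : ℕ} (x θ : EuclideanSpace ℝ (Fin n)) (α : ℝ) :
    Set (EuclideanSpace ℝ (Fin n)) :=
  {y | α * ‖y - x‖ < ⟪y - x, θ⟫}

variable {n : ℕ}

private lemma ahs_subset {x θ θ' : EuclideanSpace ℝ (Fin n)} {α : ℝ} (hα : 0 < α)
    (hnet : ‖θ - θ'‖ ≤ α / 2) :
    almostHalfSpace x θ α ⊆ almostHalfSpace x θ' (α / 2) := by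
  intro y hy
  simp only [almostHalfSpace, mem_setOf_eq] at hy ⊢
  have h1 : ⟪y - x, θ - θ'⟫ ≤ ‖y - x‖ * ‖θ - θ'‖ := real_inner_le_norm _ _
  have h2 : ⟪y - x, θ'⟫ = ⟪y - x, θ⟫ - ⟪y - x, θ - θ'⟫ := by
    rw [inner_sub_right]; ring
  have h3 : ‖y - x‖ * ‖θ - θ'‖ ≤ ‖y - x‖ * (α / 2) := by
    apply mul_le_mul_of_nonneg_left hnet (norm_nonneg _)
  nlinarith [norm_nonneg (y - x)]

private lemma exists_net (β : ℝ) (hβ : 0 < β) :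
    ∃ Θ : Finset (EuclideanSpace ℝ (Fin n)), (∀ θ' ∈ Θ, ‖θ'‖ = 1) ∧
      ∀ θ : EuclideanSpace ℝ (Fin n), ‖θ‖ = 1 → ∃ θ' ∈ Θ, ‖θ - θ'‖ ≤ β := by
  classical
  obtain ⟨t, ht⟩ := (isCompact_sphere (0 : EuclideanSpace ℝ (Fin n)) 1).elim_finite_subcover
    (fun θ : sphere (0 : EuclideanSpace ℝ (Fin n)) 1 => ball (θ : EuclideanSpace ℝ (Fin n)) β)
    (fun _ => isOpen_ball)
    (fun θ hθ => mem_iUnion.2 ⟨⟨θ, hθ⟩, mem_ball_self hβ⟩)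
  refine ⟨t.image Subtype.val, ?_, ?_⟩
  · intro θ' hθ'
    obtain ⟨a, _, rfl⟩ := Finset.mem_image.1 hθ'
    exact mem_sphere_zero_iff_norm.1 a.2
  · intro θ hθ
    obtain ⟨a, ha, hmem⟩ := mem_iUnion₂.1 (ht (mem_sphere_zero_iff_norm.2 hθ))
    exact ⟨a, Finset.mem_image_of_mem Subtype.val ha, by
      rw [← dist_eq_norm]; exact le_of_lt hmem⟩

private lemma freq_doubling (hn : 0 < n) (μ : Measure (EuclideanSpace ℝ (Fin n)))
    [IsFiniteMeasure μ] :
    ∀ᵐ x ∂μ, ∃ᶠ r in nhdsWithin (0:ℝ) (Set.Ioi 0),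
      μ (closedBall x (3*r)) ≤ (3:ℝ≥0∞)^(n+1) * μ (closedBall x r) := by
  haveI : Nontrivial (EuclideanSpace ℝ (Fin n)) := by
    apply Module.nontrivial_of_finrank_pos (R := ℝ)
    rw [finrank_euclideanSpace_fin]; exact hn
  set K : ℝ≥0∞ := (3:ℝ≥0∞)^(n+1) with hK
  have hK0 : K ≠ 0 := pow_ne_zero _ (by norm_num)
  have hKt : K ≠ ∞ := ENNReal.pow_ne_top (by norm_num)
  set D : ℕ → Set (EuclideanSpace ℝ (Fin n)) := fun m =>
    {x | ∀ r : ℝ, 0 < r → r < 1/(m+1) → K * μ (closedBall x r) < μ (closedBall x (3*r))}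
    with hD
  have hDnull : ∀ m, μ (D m) = 0 := by
    intro m
    set ρ₀ : ℝ := (1/(m+1:ℝ))/2 with hρ₀
    have hρ₀pos : 0 < ρ₀ := by positivity
    have hρ₀lt : ρ₀ < 1/(m+1:ℝ) := by
      rw [hρ₀]; have : (0:ℝ) < 1/(m+1:ℝ) := by positivity
      linarith
    -- iteration
    have hiter : ∀ x ∈ D m, ∀ j : ℕ, μ (closedBall x (ρ₀ / 3^j)) ≤ K⁻¹^j * μ (closedBall x ρ₀) := by
      intro x hx j
      induction j with
      | zero => simp
      | succ j ih =>
        have hs : (0:ℝ) < ρ₀ / 3^(j+1) := by positivity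
        have hslt : ρ₀ / 3^(j+1) < 1/(m+1:ℝ) := by
          have h1 : ρ₀ / 3^(j+1) ≤ ρ₀ := by
            apply div_le_self hρ₀pos.le
            exact one_le_pow₀ (by norm_num)
          linarith
        have h3 : 3 * (ρ₀ / 3^(j+1)) = ρ₀ / 3^j := by
          rw [pow_succ]; field_simp
        have hstep := hx _ hs hslt
        rw [h3] at hstep
        calc μ (closedBall x (ρ₀ / 3^(j+1)))
            = K⁻¹ * (K * μ (closedBall x (ρ₀ / 3^(j+1)))) := by
              rw [← mul_assoc, ENNReal.inv_mul_cancel hK0 hKt, one_mul]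
          _ ≤ K⁻¹ * (K⁻¹^j * μ (closedBall x ρ₀)) := by
              exact mul_le_mul_right (hstep.le.trans ih) _
          _ = K⁻¹^(j+1) * μ (closedBall x ρ₀) := by rw [← mul_assoc, ← pow_succ']
    -- power bound
    have hbound : ∀ x ∈ D m, ∀ r : ℝ, 0 < r → r ≤ ρ₀ →
        μ (closedBall x r) ≤ ENNReal.ofReal ((3/ρ₀)^(n+1) * r^(n+1)) * μ univ := by
      intro x hx r hr hrρ
      have hex : ∃ j : ℕ, ρ₀ / 3^(j+1) < r := by
        obtain ⟨j, hj⟩ := pow_unbounded_of_one_lt (ρ₀ / r) (by norm_num : (1:ℝ) < 3)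
        have h1 : ρ₀ < 3^j * r := by
          rw [div_lt_iff₀ hr] at hj; linarith [hj]
        refine ⟨j, ?_⟩
        rw [div_lt_iff₀ (by positivity)]
        have h2 : (3:ℝ)^(j+1) = 3^j*3 := pow_succ 3 j
        nlinarith [pow_pos (show (0:ℝ)<3 by norm_num) j]
      obtain ⟨j, hj1, hj2⟩ : ∃ j:ℕ, ρ₀/3^(j+1) < r ∧ r ≤ ρ₀/3^j := by
        refine ⟨Nat.find hex, Nat.find_spec hex, ?_⟩
        rcases h : Nat.find hex with _ | k
        · simpa using hrρ
        · have hk : k < Nat.find hex := by omega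
          have := Nat.find_min hex hk
          rw [not_lt] at this
          exact this
      have hKj : (K⁻¹)^j ≤ ENNReal.ofReal ((3/ρ₀)^(n+1) * r^(n+1)) := by
        have e1 : K⁻¹ = ENNReal.ofReal (((3:ℝ)^(n+1))⁻¹) := by
          rw [hK, ENNReal.ofReal_inv_of_pos (by positivity), ENNReal.ofReal_pow (by norm_num)]
          norm_num
        rw [e1, ← ENNReal.ofReal_pow (by positivity)]
        apply ENNReal.ofReal_le_ofReal
        have e2 : (((3:ℝ)^(n+1))⁻¹)^j = (((3:ℝ)^j)⁻¹)^(n+1) := by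
          rw [← inv_pow, ← inv_pow, ← pow_mul, ← pow_mul, mul_comm]
        rw [e2]
        have hbase : ((3:ℝ)^j)⁻¹ ≤ 3/ρ₀ * r := by
          have h1 : ρ₀ < r * 3^(j+1) := by rwa [div_lt_iff₀ (by positivity)] at hj1
          have h2 : (3:ℝ)^(j+1) = 3^j*3 := pow_succ 3 j
          rw [inv_eq_one_div, show (3:ℝ)/ρ₀*r = (3*r)/ρ₀ by ring,
            div_le_div_iff₀ (by positivity) (by positivity)]
          nlinarith
        calc (((3:ℝ)^j)⁻¹)^(n+1) ≤ (3/ρ₀ * r)^(n+1) := by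
              apply pow_le_pow_left₀ (by positivity) hbase
          _ = (3/ρ₀)^(n+1) * r^(n+1) := by rw [mul_pow]
      calc μ (closedBall x r) ≤ μ (closedBall x (ρ₀ / 3^j)) := by
            apply measure_mono; exact closedBall_subset_closedBall hj2
        _ ≤ K⁻¹^j * μ (closedBall x ρ₀) := hiter x hx j
        _ ≤ ENNReal.ofReal ((3/ρ₀)^(n+1) * r^(n+1)) * μ univ := by
            exact mul_le_mul' hKj (measure_mono (subset_univ _))
    have hV0 : volume (ball (0:EuclideanSpace ℝ (Fin n)) 1) ≠ 0 :=
      (measure_ball_pos _ _ one_pos).ne'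
    have hVt : volume (ball (0:EuclideanSpace ℝ (Fin n)) 1) ≠ ∞ := measure_ball_lt_top.ne
    set V : ℝ≥0∞ := volume (ball (0:EuclideanSpace ℝ (Fin n)) 1) with hV
    have hA0 : (0:ℝ) ≤ (3/ρ₀)^(n+1) := by positivity
    have hRnull : ∀ R : ℕ, μ (D m ∩ closedBall 0 R) = 0 := by
      intro R
      set W : ℝ≥0∞ := ENNReal.ofReal ((3/ρ₀)^(n+1)) * μ univ * V⁻¹ *
        volume (closedBall (0:EuclideanSpace ℝ (Fin n)) R) with hW
      have hWt : W ≠ ∞ := by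
        apply ENNReal.mul_ne_top; apply ENNReal.mul_ne_top; apply ENNReal.mul_ne_top
        · exact ENNReal.ofReal_ne_top
        · exact measure_ne_top μ _
        · exact ENNReal.inv_ne_top.2 hV0
        · exact measure_closedBall_lt_top.ne
      have hδW : ∀ δ : ℝ, 0 < δ → δ ≤ ρ₀ → μ (D m ∩ closedBall 0 R) ≤ ENNReal.ofReal δ * W := by
        intro δ hδ0 hδρ
        set Cδ : ℝ≥0∞ := ENNReal.ofReal ((3/ρ₀)^(n+1)) * ENNReal.ofReal δ * μ univ * V⁻¹
          with hCδ
        have hCδt : Cδ < ∞ := by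
          rw [hCδ]
          apply ENNReal.mul_lt_top; apply ENNReal.mul_lt_top; apply ENNReal.mul_lt_top
          · exact ENNReal.ofReal_lt_top
          · exact ENNReal.ofReal_lt_top
          · exact (measure_lt_top μ _)
          · exact ENNReal.inv_lt_top.2 (pos_iff_ne_zero.2 hV0)
        haveI : IsLocallyFiniteMeasure
            (Cδ • (volume : Measure (EuclideanSpace ℝ (Fin n)))) := by
          constructor
          intro x
          refine ⟨ball x 1, ball_mem_nhds x one_pos, ?_⟩
          rw [Measure.smul_apply, smul_eq_mul]
          exact ENNReal.mul_lt_top hCδt measure_ball_lt_top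
        have hcomp : ∀ x ∈ D m ∩ closedBall (0:EuclideanSpace ℝ (Fin n)) (R:ℝ),
            ∀ r:ℝ, 0 < r → r ≤ δ →
            μ (closedBall x r) ≤ (Cδ • volume) (closedBall x r) := by
          intro x hx r hr hrδ
          have hb := hbound x hx.1 r hr (hrδ.trans hδρ)
          have hvol : (volume : Measure (EuclideanSpace ℝ (Fin n))) (closedBall x r)
              = ENNReal.ofReal (r^n) * V := by
            rw [Measure.addHaar_closedBall _ x hr.le, finrank_euclideanSpace_fin, hV]
          rw [Measure.smul_apply, smul_eq_mul, hvol]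
          have hVc : V⁻¹ * V = 1 := ENNReal.inv_mul_cancel hV0 hVt
          have heq : Cδ * (ENNReal.ofReal (r^n) * V)
              = ENNReal.ofReal ((3/ρ₀)^(n+1) * (δ * r^n)) * μ univ := by
            rw [ENNReal.ofReal_mul hA0, ENNReal.ofReal_mul hδ0.le, hCδ]
            calc ENNReal.ofReal ((3/ρ₀)^(n+1)) * ENNReal.ofReal δ * μ univ * V⁻¹ *
                  (ENNReal.ofReal (r^n) * V)
                = ENNReal.ofReal ((3/ρ₀)^(n+1)) * (ENNReal.ofReal δ * ENNReal.ofReal (r^n)) *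
                  μ univ * (V⁻¹ * V) := by ring
              _ = ENNReal.ofReal ((3/ρ₀)^(n+1)) * (ENNReal.ofReal δ * ENNReal.ofReal (r^n)) *
                  μ univ := by rw [hVc, mul_one]
          rw [heq]
          refine le_trans hb (mul_le_mul_left (ENNReal.ofReal_le_ofReal ?_) _)
          have h2 : r^(n+1) ≤ δ * r^n := by
            rw [pow_succ]
            calc r^n * r ≤ r^n * δ := mul_le_mul_of_nonneg_left hrδ (pow_nonneg hr.le n)
              _ = δ * r^n := mul_comm _ _
          exact mul_le_mul_of_nonneg_left h2 hA0
        have hle := VitaliFamily.measure_le_of_frequently_le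
          (v := Besicovitch.vitaliFamily μ) (Cδ • volume) Measure.AbsolutelyContinuous.rfl
          (D m ∩ closedBall 0 R) (fun x hx => by
            apply (Besicovitch.tendsto_filterAt μ x).frequently
            have hev : ∀ᶠ r in nhdsWithin (0:ℝ) (Set.Ioi 0),
                μ (closedBall x r) ≤ (Cδ • volume) (closedBall x r) := by
              filter_upwards [Ioc_mem_nhdsGT_of_mem ⟨le_rfl, hδ0⟩] with r hr
              exact hcomp x hx r hr.1 hr.2
            exact hev.frequently)
        refine le_trans hle ?_
        rw [Measure.smul_apply, smul_eq_mul]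
        calc Cδ * volume (D m ∩ closedBall 0 R)
            ≤ Cδ * volume (closedBall (0:EuclideanSpace ℝ (Fin n)) R) := by
              gcongr; exact inter_subset_right
          _ = ENNReal.ofReal δ * W := by rw [hCδ, hW]; ring
      have htend : Tendsto (fun δ:ℝ => ENNReal.ofReal δ * W) (nhdsWithin (0:ℝ) (Set.Ioi 0))
          (nhds (ENNReal.ofReal 0 * W)) := by
        apply ENNReal.Tendsto.mul_const
        · exact (ENNReal.continuous_ofReal.tendsto 0).mono_left nhdsWithin_le_nhds
        · exact Or.inr hWt
      have hres : μ (D m ∩ closedBall 0 R) ≤ ENNReal.ofReal 0 * W := by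
        apply ge_of_tendsto htend
        filter_upwards [Ioc_mem_nhdsGT_of_mem ⟨le_rfl, hρ₀pos⟩] with δ hδ
        exact hδW δ hδ.1 hδ.2
      simpa using hres
    have hcover : D m ⊆ ⋃ R:ℕ, D m ∩ closedBall 0 R := by
      intro x hx
      obtain ⟨R, hR⟩ := exists_nat_ge ‖x‖
      exact mem_iUnion.2 ⟨R, hx, by simpa [mem_closedBall_zero_iff] using hR⟩
    exact measure_mono_null hcover (measure_iUnion_null hRnull)
  rw [ae_iff]
  apply measure_mono_null _ (measure_iUnion_null hDnull)
  intro x hx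
  simp only [mem_setOf_eq] at hx
  rw [Filter.not_frequently] at hx
  have hx' : ∀ᶠ r in nhdsWithin (0:ℝ) (Set.Ioi 0),
      K * μ (closedBall x r) < μ (closedBall x (3*r)) := by
    filter_upwards [hx] with r hr
    exact lt_of_not_ge hr
  obtain ⟨u, hu, hsub⟩ := mem_nhdsGT_iff_exists_Ioo_subset.1 hx'
  obtain ⟨m, hm⟩ := exists_nat_one_div_lt (mem_Ioi.1 hu)
  refine mem_iUnion.2 ⟨m, fun r hr hrm => ?_⟩
  exact hsub ⟨hr, by push_cast at hm ⊢; linarith⟩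

private lemma arith_half (n N : ℕ) (B : ℝ≥0∞) :
    (N : ℝ≥0∞) * (ENNReal.ofReal (2 * (1 / (4 * ((N:ℝ)+1) * 3^(n+1)))) *
      ((3:ℝ≥0∞)^(n+1) * B)) ≤ (1/2 : ℝ≥0∞) * B := by
  have e1 : (N : ℝ≥0∞) * (ENNReal.ofReal (2 * (1 / (4 * ((N:ℝ)+1) * 3^(n+1)))) *
      ((3:ℝ≥0∞)^(n+1) * B)) =
      ((N : ℝ≥0∞) * ENNReal.ofReal (2 * (1 / (4 * ((N:ℝ)+1) * 3^(n+1)))) *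
        (3:ℝ≥0∞)^(n+1)) * B := by ring
  rw [e1]
  apply mul_le_mul_left
  have e2 : (N : ℝ≥0∞) = ENNReal.ofReal (N:ℝ) := by rw [ENNReal.ofReal_natCast]
  have e3 : (3:ℝ≥0∞)^(n+1) = ENNReal.ofReal ((3:ℝ)^(n+1)) := by
    rw [ENNReal.ofReal_pow (by norm_num)]; norm_num
  rw [e2, e3, ← ENNReal.ofReal_mul (by positivity), ← ENNReal.ofReal_mul (by positivity)]
  have e4 : ((1:ℝ≥0∞)/2) = ENNReal.ofReal (1/2 : ℝ) := by
    rw [ENNReal.ofReal_div_of_pos (by norm_num)]; norm_num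
  rw [e4]
  apply ENNReal.ofReal_le_ofReal
  have h3p : (0:ℝ) < 3^(n+1) := by positivity
  have hN1 : (0:ℝ) < (N:ℝ)+1 := by positivity
  have hkey : (N:ℝ) * (2 * (1 / (4 * ((N:ℝ) + 1) * 3 ^ (n + 1)))) * 3 ^ (n + 1)
      = (N:ℝ)/((N:ℝ)+1) * (1/2) := by field_simp; ring
  rw [hkey]
  have h1 : (N:ℝ)/((N:ℝ)+1) ≤ 1 := by rw [div_le_one hN1]; linarith
  calc (N:ℝ)/((N:ℝ)+1) * (1/2) ≤ 1 * (1/2) :=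
        mul_le_mul_of_nonneg_right h1 (by norm_num)
    _ = 1/2 := one_mul _

private lemma half_le_threequarter (B : ℝ≥0∞) : (1/2 : ℝ≥0∞) * B ≤ (3/4 : ℝ≥0∞) * B := by
  apply mul_le_mul_left
  have e4 : ((1:ℝ≥0∞)/2) = ENNReal.ofReal (1/2 : ℝ) := by
    rw [ENNReal.ofReal_div_of_pos (by norm_num)]; norm_num
  have e5 : ((3:ℝ≥0∞)/4) = ENNReal.ofReal (3/4 : ℝ) := by
    rw [ENNReal.ofReal_div_of_pos (by norm_num)]; norm_num
  rw [e4, e5]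
  exact ENNReal.ofReal_le_ofReal (by norm_num)

theorem stmt2 (n : ℕ) (α : ℝ) (hα0 : 0 < α) (hα1 : α ≤ 1) :
    ∃ c : ℝ, 0 < c ∧
      ∀ (μ : Measure (EuclideanSpace ℝ (Fin n))) [IsFiniteMeasure μ],
        ∀ᵐ x ∂μ, ENNReal.ofReal c <
          limsup (fun r : ℝ =>
            ⨅ θ : sphere (0 : EuclideanSpace ℝ (Fin n)) 1,
              μ (closedBall x r \ almostHalfSpace x θ α) / μ (closedBall x r))
            (nhdsWithin 0 (Set.Ioi 0)) := by
  rcases Nat.eq_zero_or_pos n with hn | hn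
  · -- degenerate case: empty sphere
    subst hn
    refine ⟨1/2, by norm_num, ?_⟩
    intro μ _
    haveI : IsEmpty (sphere (0 : EuclideanSpace ℝ (Fin 0)) 1) := by
      constructor
      rintro ⟨θ, hθ⟩
      have hθ0 : θ = 0 := by ext i; exact i.elim0
      rw [mem_sphere_zero_iff_norm, hθ0, norm_zero] at hθ
      norm_num at hθ
    filter_upwards with x
    have : (fun r : ℝ =>
        ⨅ θ : sphere (0 : EuclideanSpace ℝ (Fin 0)) 1,
          μ (closedBall x r \ almostHalfSpace x θ α) / μ (closedBall x r)) = fun _ => ⊤ := by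
      funext r; exact iInf_of_empty _
    rw [this, limsup_const]
    exact ENNReal.ofReal_lt_top
  · -- main case
    haveI : Nonempty (sphere (0 : EuclideanSpace ℝ (Fin n)) 1) := by
      refine ⟨⟨EuclideanSpace.single ⟨0, hn⟩ (1:ℝ), ?_⟩⟩
      rw [mem_sphere_zero_iff_norm, EuclideanSpace.norm_single, norm_one]
    obtain ⟨Θ, hΘnorm, hΘnet⟩ := exists_net (n := n) (α/2) (half_pos hα0)
    set N : ℕ := Θ.card with hN
    set c : ℝ := 1 / (4 * (N+1) * 3^(n+1)) with hc
    have hcpos : 0 < c := by rw [hc]; positivity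
    refine ⟨c, hcpos, ?_⟩
    intro μ _
    set c' : ℝ := 2*c with hc'
    set K : ℝ≥0∞ := (3:ℝ≥0∞)^(n+1) with hK
    rw [ae_iff]
    simp only [not_lt]
    set T : ℕ → Set (EuclideanSpace ℝ (Fin n)) := fun m =>
      {x | ∀ r : ℝ, 0 < r → r < 1/(m+1) → ∃ θ' ∈ Θ,
        μ (closedBall x r \ almostHalfSpace x θ' (α/2)) ≤
          ENNReal.ofReal c' * μ (closedBall x r)} with hT
    have hsub : {x | limsup (fun r : ℝ =>
        ⨅ θ : sphere (0 : EuclideanSpace ℝ (Fin n)) 1,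
          μ (closedBall x r \ almostHalfSpace x θ α) / μ (closedBall x r))
        (nhdsWithin 0 (Set.Ioi 0)) ≤ ENNReal.ofReal c} ⊆ ⋃ m, T m := by
      intro x hx
      simp only [mem_setOf_eq] at hx
      have h1 : limsup (fun r : ℝ =>
          ⨅ θ : sphere (0 : EuclideanSpace ℝ (Fin n)) 1,
            μ (closedBall x r \ almostHalfSpace x θ α) / μ (closedBall x r))
          (nhdsWithin 0 (Set.Ioi 0)) < ENNReal.ofReal c' := by
        refine lt_of_le_of_lt hx ?_
        rw [ENNReal.ofReal_lt_ofReal_iff (by rw [hc']; linarith)]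
        rw [hc']; linarith
      have h2 := eventually_lt_of_limsup_lt h1
      obtain ⟨u, hu, husub⟩ := mem_nhdsGT_iff_exists_Ioo_subset.1 h2
      obtain ⟨m, hm⟩ := exists_nat_one_div_lt (mem_Ioi.1 hu)
      refine mem_iUnion.2 ⟨m, fun r hr hrm => ?_⟩
      have hru : r ∈ Ioo (0:ℝ) u := ⟨hr, by push_cast at hm ⊢; linarith⟩
      have hiInf := husub hru
      simp only [mem_setOf_eq] at hiInf
      rw [iInf_lt_iff] at hiInf
      obtain ⟨⟨θ, hθmem⟩, hθlt⟩ := hiInf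
      have hθu : ‖θ‖ = 1 := mem_sphere_zero_iff_norm.1 hθmem
      obtain ⟨θ', hθ'Θ, hθ'cl⟩ := hΘnet θ hθu
      refine ⟨θ', hθ'Θ, ?_⟩
      have hmono : μ (closedBall x r \ almostHalfSpace x θ' (α/2)) ≤
          μ (closedBall x r \ almostHalfSpace x θ α) :=
        measure_mono (diff_subset_diff_right (ahs_subset hα0 hθ'cl))
      refine le_trans hmono ?_
      by_cases hb0 : μ (closedBall x r) = 0
      · have : μ (closedBall x r \ almostHalfSpace x θ α) = 0 :=
          measure_mono_null diff_subset hb0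
        simp [this]
      · have hbt : μ (closedBall x r) ≠ ∞ := measure_ne_top μ _
        exact ((ENNReal.div_lt_iff (Or.inl hb0) (Or.inl hbt)).1 hθlt).le
    refine measure_mono_null hsub (measure_iUnion_null fun m => ?_)
    -- show μ (T m) = 0
    by_contra hTm
    haveI : (ae (μ.restrict (T m))).NeBot :=
      ae_neBot.2 (fun h0 => hTm (Measure.restrict_eq_zero.mp h0))
    have hden := Besicovitch.ae_tendsto_measure_inter_div μ (T m)
    have hdub : ∀ᵐ x ∂μ.restrict (T m), ∃ᶠ r in nhdsWithin (0:ℝ) (Set.Ioi 0),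
        μ (closedBall x (3*r)) ≤ K * μ (closedBall x r) :=
      (freq_doubling hn μ).filter_mono (ae_mono Measure.restrict_le_self)
    obtain ⟨x₀, hx₀den, hx₀dub⟩ := (hden.and hdub).exists
    have h34 : ∀ᶠ r in nhdsWithin (0:ℝ) (Set.Ioi 0),
        (3/4 : ℝ≥0∞) < μ (T m ∩ closedBall x₀ r) / μ (closedBall x₀ r) :=
      hx₀den.eventually (eventually_gt_nhds (by
        rw [ENNReal.div_lt_iff (by norm_num) (by norm_num)]; norm_num : (3/4:ℝ≥0∞) < 1))
    have hw : (0:ℝ) < 1/(2*(m+1)) := by positivity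
    obtain ⟨r, ⟨hdubr, h34r, hrIoo⟩⟩ :=
      (hx₀dub.and_eventually (h34.and (Ioo_mem_nhdsGT_of_mem ⟨le_rfl, hw⟩))).exists
    have hr0 : 0 < r := hrIoo.1
    have h2rm : 2*r < 1/(m+1:ℝ) := by
      have h1 : r < 1/(2*(m+1:ℝ)) := hrIoo.2
      have h2 : (2:ℝ) * (1/(2*(m+1:ℝ))) = 1/(m+1:ℝ) := by field_simp
      linarith
    set B : ℝ≥0∞ := μ (closedBall x₀ r) with hB
    have hBt : B ≠ ∞ := measure_ne_top μ _
    have hB0 : B ≠ 0 := by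
      intro h0
      have ha0 : μ (T m ∩ closedBall x₀ r) = 0 :=
        measure_mono_null inter_subset_right h0
      rw [ha0, h0] at h34r
      simp [ENNReal.zero_div] at h34r
    have h34m : (3/4 : ℝ≥0∞) * B < μ (T m ∩ closedBall x₀ r) :=
      (ENNReal.lt_div_iff_mul_lt (Or.inl hB0) (Or.inl hBt)).1 h34r
    -- the partition sets
    set G : EuclideanSpace ℝ (Fin n) → Set (EuclideanSpace ℝ (Fin n)) := fun θ' =>
      {y | y ∈ T m ∩ closedBall x₀ r ∧
        μ (closedBall y (2*r) \ almostHalfSpace y θ' (α/2)) ≤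
          ENNReal.ofReal c' * μ (closedBall y (2*r))} with hG
    have hcover : T m ∩ closedBall x₀ r ⊆ ⋃ θ' ∈ Θ, G θ' := by
      intro y hy
      obtain ⟨θ', hθ'Θ, hθ'est⟩ := hy.1 (2*r) (by linarith) h2rm
      exact mem_iUnion₂.2 ⟨θ', hθ'Θ, ⟨hy, hθ'est⟩⟩
    -- bound each piece
    have hball : ∀ θ', ∀ y ∈ G θ',
        μ (closedBall y (2*r) \ almostHalfSpace y θ' (α/2)) ≤
          ENNReal.ofReal c' * (K * B) := by
      intro θ' y hy
      refine le_trans hy.2 ?_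
      gcongr
      refine le_trans (measure_mono (closedBall_subset_closedBall'
        (show 2*r + dist y x₀ ≤ 3*r by
          have := hy.1.2; rw [mem_closedBall] at this; linarith))) ?_
      exact hdubr
    have hkey : ∀ θ', ∀ y ∈ G θ', ∀ z ∈ G θ', ⟪z, θ'⟫ ≤ ⟪y, θ'⟫ →
        z ∈ closedBall y (2*r) \ almostHalfSpace y θ' (α/2) := by
      intro θ' y hy z hz hzy
      constructor
      · rw [mem_closedBall]
        have h1 : dist z x₀ ≤ r := hz.1.2
        have h2 : dist y x₀ ≤ r := hy.1.2
        calc dist z y ≤ dist z x₀ + dist x₀ y := dist_triangle _ _ _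
          _ ≤ r + r := by rw [dist_comm x₀ y]; linarith
          _ = 2*r := by ring
      · intro hmem
        simp only [almostHalfSpace, mem_setOf_eq] at hmem
        have h3 : ⟪z - y, θ'⟫ = ⟪z, θ'⟫ - ⟪y, θ'⟫ := by rw [inner_sub_left]
        have h4 : (0:ℝ) ≤ α/2 * ‖z - y‖ := by positivity
        linarith
    have hGbound : ∀ θ' ∈ Θ, μ (G θ') ≤ ENNReal.ofReal c' * (K * B) := by
      intro θ' _
      rcases (G θ').eq_empty_or_nonempty with hGe | hGne
      · simp [hGe]
      · set S : Set ℝ := (fun y => ⟪y, θ'⟫) '' G θ' with hS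
        have hSne : S.Nonempty := hGne.image _
        have hSbdd : BddAbove S := by
          refine ⟨‖x₀‖ + r, ?_⟩
          rintro s ⟨y, hy, rfl⟩
          have h1 : ⟪y, θ'⟫ ≤ ‖y‖ * ‖θ'‖ := real_inner_le_norm _ _
          have h2 : ‖y‖ ≤ ‖x₀‖ + r := by
            have := hy.1.2
            rw [mem_closedBall, dist_eq_norm] at this
            calc ‖y‖ = ‖(y - x₀) + x₀‖ := by rw [sub_add_cancel]
              _ ≤ ‖y - x₀‖ + ‖x₀‖ := norm_add_le _ _
              _ ≤ r + ‖x₀‖ := by linarith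
              _ = ‖x₀‖ + r := by ring
          have h3 : ‖θ'‖ ≤ 1 := by rw [hΘnorm θ' ‹θ' ∈ Θ›]
          nlinarith [norm_nonneg y]
        set t : ℝ := sSup S with ht
        by_cases hcase : ∃ y ∈ G θ', ⟪y, θ'⟫ = t
        · obtain ⟨y, hyG, hyt⟩ := hcase
          refine le_trans (measure_mono ?_) (hball θ' y hyG)
          intro z hz
          exact hkey θ' y hyG z hz (by rw [hyt]; exact le_csSup hSbdd ⟨z, hz, rfl⟩)
        · push_neg at hcase
          have hlt : ∀ z ∈ G θ', ⟪z, θ'⟫ < t := fun z hz =>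
            lt_of_le_of_ne (le_csSup hSbdd ⟨z, hz, rfl⟩) (hcase z hz)
          set Sl : ℕ → Set (EuclideanSpace ℝ (Fin n)) := fun k =>
            closedBall x₀ r ∩ (fun z => ⟪z, θ'⟫) ⁻¹' Ioo (t - 1/(k+1)) t with hSl
          have hcont : Continuous fun z : EuclideanSpace ℝ (Fin n) => ⟪z, θ'⟫ :=
            continuous_id.inner continuous_const
          have hmeas : ∀ k, NullMeasurableSet (Sl k) μ := fun k =>
            (measurableSet_closedBall.inter
              (measurableSet_Ioo.preimage hcont.measurable)).nullMeasurableSet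
          have hanti : Antitone Sl := by
            intro k k' hkk'
            apply inter_subset_inter_right
            apply preimage_mono
            apply Ioo_subset_Ioo_left
            have hcast : ((k:ℝ)+1) ≤ ((k':ℝ)+1) := by
              have := (Nat.cast_le (α := ℝ)).2 hkk'
              linarith
            have h1 : 1/((k':ℝ)+1) ≤ 1/((k:ℝ)+1) :=
              one_div_le_one_div_of_le (by positivity) hcast
            linarith
          have hempty : ⋂ k, Sl k = ∅ := by
            rw [eq_empty_iff_forall_notMem]
            intro z hz
            rw [mem_iInter] at hz
            have hz' : ∀ k : ℕ, t - 1/(k+1) < ⟪z, θ'⟫ ∧ ⟪z, θ'⟫ < t := by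
              intro k
              have := (hz k).2
              rwa [mem_preimage, mem_Ioo] at this
            have h1 := (hz' 0).2
            obtain ⟨k, hk⟩ := exists_nat_one_div_lt (sub_pos.2 h1)
            have h2 := (hz' k).1
            linarith
          have htendSl : Tendsto (fun k => μ (Sl k)) atTop (nhds 0) := by
            have h := tendsto_measure_iInter_atTop hmeas hanti ⟨0, measure_ne_top μ _⟩
            rw [hempty] at h
            simpa [Function.comp_def] using h
          have hbd : ∀ k : ℕ, μ (G θ') ≤ ENNReal.ofReal c' * (K * B) + μ (Sl k) := by
            intro k
            have hk1 : (0:ℝ) < 1/(k+1) := by positivity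
            obtain ⟨s, ⟨y, hyG, rfl⟩, hys⟩ :=
              exists_lt_of_lt_csSup hSne (by linarith : t - 1/(k+1) < t)
            have hsplit : G θ' ⊆ (closedBall y (2*r) \ almostHalfSpace y θ' (α/2)) ∪ Sl k := by
              intro z hz
              by_cases hzy : ⟪z, θ'⟫ ≤ ⟪y, θ'⟫
              · exact Or.inl (hkey θ' y hyG z hz hzy)
              · push_neg at hzy
                refine Or.inr ⟨hz.1.2, ?_, hlt z hz⟩
                linarith
            refine le_trans (measure_mono hsplit) (le_trans (measure_union_le _ _) ?_)
            exact add_le_add_left (hball θ' y hyG) _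
          have hlim : Tendsto (fun k : ℕ => ENNReal.ofReal c' * (K * B) + μ (Sl k)) atTop
              (nhds (ENNReal.ofReal c' * (K * B) + 0)) :=
            tendsto_const_nhds.add htendSl
          have := ge_of_tendsto hlim (Eventually.of_forall hbd)
          rwa [add_zero] at this
    -- sum up
    have hsum : μ (T m ∩ closedBall x₀ r) ≤ (N : ℝ≥0∞) * (ENNReal.ofReal c' * (K * B)) := by
      refine le_trans (measure_mono hcover) (le_trans (measure_biUnion_finset_le Θ G) ?_)
      calc ∑ θ' ∈ Θ, μ (G θ') ≤ ∑ _θ' ∈ Θ, ENNReal.ofReal c' * (K * B) :=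
            Finset.sum_le_sum hGbound
        _ = (N : ℝ≥0∞) * (ENNReal.ofReal c' * (K * B)) := by
            rw [Finset.sum_const, hN, nsmul_eq_mul]
    -- arithmetic: N * c' * K ≤ 1/2
    have harith : (N : ℝ≥0∞) * (ENNReal.ofReal c' * (K * B)) ≤ (1/2 : ℝ≥0∞) * B := by
      rw [hc', hc, hK]
      exact arith_half n N B
    have hfinal : (3/4 : ℝ≥0∞) * B < (3/4 : ℝ≥0∞) * B := by
      calc (3/4 : ℝ≥0∞) * B < μ (T m ∩ closedBall x₀ r) := h34m
        _ ≤ (N : ℝ≥0∞) * (ENNReal.ofReal c' * (K * B)) := hsum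
        _ ≤ (1/2 : ℝ≥0∞) * B := harith
        _ ≤ (3/4 : ℝ≥0∞) * B := half_le_threequarter B
    exact absurd hfinal (lt_irrefl _)
end

section
/- Let x₀, y₀ ∈ ℝⁿ, r_x, r_y > 0, θ ∈ S^{n-1}, and ε > 0 with ε < 1. Suppose |y₀ − x₀| ≥ t(r_x + r_y) and (y₀ − x₀)·θ ≥ (1−ε)|y₀−x₀| where t ≥ 1 satisfies (1−ε)t − 1 > 0. Then for all y ∈ B(y₀, r_y) and x ∈ B(x₀, r_x), ((y−x)·θ)/|y−x| ≥ (1−ε)/(1 + 1/t) − 1/(t+1). -/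
/-
Write `v = y - x` and `v₀ = y₀ - x₀`, so `dist v v₀ ≤ r := r_x + r_y ≤ ‖v₀‖ / t`. Moving `v₀` by at most
`r` lowers `⟪·, θ⟫` by at most `r` and raises the norm by at most `r`, so with `c = 1 - ε` the cosine of
the angle between `v` and `θ` is at least `(c‖v₀‖ - r) / (‖v₀‖ + r)`. This ratio increases with `‖v₀‖ / r`,
so it is at least its value `(ct - 1) / (t + 1)` at `‖v₀‖ = t r`.
-/

open Metric
open scoped RealInnerProductSpace

section InnerProductSpace

variable {E : Type*} [NormedAddCommGroup E] [InnerProductSpace ℝ E]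

lemma real_inner_le_norm_of_norm_le_one (v : E) {θ : E} (hθ : ‖θ‖ ≤ 1) : ⟪v, θ⟫ ≤ ‖v‖ :=
  (real_inner_le_norm v θ).trans (mul_le_of_le_one_right (norm_nonneg v) hθ)

lemma real_inner_sub_dist_le_of_norm_le_one (v v₀ : E) {θ : E} (hθ : ‖θ‖ ≤ 1) :
    ⟪v₀, θ⟫ - dist v v₀ ≤ ⟪v, θ⟫ := by
  have h := real_inner_le_norm_of_norm_le_one (v₀ - v) hθ
  rw [inner_sub_left, ← dist_eq_norm, dist_comm] at h
  linarith

lemma div_le_real_inner_div_norm_of_dist_le {v v₀ θ : E} {c t r : ℝ} (hθ : ‖θ‖ ≤ 1)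
    (ht : 0 < t) (hct : 1 < c * t) (hr : 0 < r) (hsep : t * r ≤ ‖v₀‖)
    (hangle : c * ‖v₀‖ ≤ ⟪v₀, θ⟫) (hv : dist v v₀ ≤ r) :
    (c * t - 1) / (t + 1) ≤ ⟪v, θ⟫ / ‖v‖ := by
  have hc : 0 < c := by nlinarith
  have hinner : c * ‖v₀‖ - r ≤ ⟪v, θ⟫ := by
    linarith [real_inner_sub_dist_le_of_norm_le_one v v₀ hθ]
  have hnorm : ‖v‖ ≤ ‖v₀‖ + r := by
    linarith [norm_le_norm_add_norm_sub' v v₀, dist_eq_norm v v₀]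
  have hnum : 0 < c * ‖v₀‖ - r := by nlinarith
  have hv_pos : 0 < ‖v‖ := hnum.trans_le (hinner.trans (real_inner_le_norm_of_norm_le_one v hθ))
  rw [div_le_div_iff₀ (by positivity) hv_pos]
  calc (c * t - 1) * ‖v‖ ≤ (c * t - 1) * (‖v₀‖ + r) := by gcongr
    _ ≤ (c * ‖v₀‖ - r) * (t + 1) := by nlinarith
    _ ≤ ⟪v, θ⟫ * (t + 1) := by gcongr

end InnerProductSpace

theorem stmt7_general (n : ℕ) (x₀ y₀ θ : EuclideanSpace ℝ (Fin n)) (r_x r_y t ε : ℝ)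
    (hθ : ‖θ‖ = 1) (hrx : 0 < r_x) (hry : 0 < r_y)
    (ht : 1 ≤ t) (ht' : 0 < (1 - ε) * t - 1)
    (hsep : t * (r_x + r_y) ≤ ‖y₀ - x₀‖)
    (hangle : (1 - ε) * ‖y₀ - x₀‖ ≤ ⟪y₀ - x₀, θ⟫) :
    ∀ y ∈ closedBall y₀ r_y, ∀ x ∈ closedBall x₀ r_x,
      (1 - ε) / (1 + 1 / t) - 1 / (t + 1) ≤ ⟪y - x, θ⟫ / ‖y - x‖ := by
  intro y hy x hx
  have ht0 : 0 < t := by linarith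
  have hv : dist (y - x) (y₀ - x₀) ≤ r_x + r_y := by
    linarith [dist_sub_sub_le y x y₀ x₀, mem_closedBall.mp hy, mem_closedBall.mp hx]
  have hconst : (1 - ε) / (1 + 1 / t) - 1 / (t + 1) = ((1 - ε) * t - 1) / (t + 1) := by
    field_simp
  rw [hconst]
  exact div_le_real_inner_div_norm_of_dist_le hθ.le ht0 (by linarith) (by positivity) hsep hangle hv

theorem stmt7 (n : ℕ) (x₀ y₀ θ : EuclideanSpace ℝ (Fin n)) (r_x r_y t ε : ℝ)
    (hθ : ‖θ‖ = 1) (hrx : 0 < r_x) (hry : 0 < r_y) (hε0 : 0 < ε) (hε1 : ε < 1)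
    (ht : 1 ≤ t) (ht' : 0 < (1 - ε) * t - 1)
    (hsep : t * (r_x + r_y) ≤ ‖y₀ - x₀‖)
    (hangle : (1 - ε) * ‖y₀ - x₀‖ ≤ ⟪y₀ - x₀, θ⟫) :
    ∀ y ∈ closedBall y₀ r_y, ∀ x ∈ closedBall x₀ r_x,
      (1 - ε) / (1 + 1 / t) - 1 / (t + 1) ≤ ⟪y - x, θ⟫ / ‖y - x‖ :=
  stmt7_general n x₀ y₀ θ r_x r_y t ε hθ hrx hry ht ht' hsep hangle
end

section
/- Let x ∈ ℝⁿ, r > 0, θ, ζ ∈ S^{n-1} and 0 < α ≤ 1. Then at least one of the two sets X⁺(x,r,ζ,α) ∩ H(x,θ,α) and X⁺(x,r,−ζ,α) ∩ H(x,θ,α) is empty. -/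
/-!
If `y - x` makes an angle less than `arcsin α` with `ζ` and less than `arccos α` with `θ`, the
triangle inequality for angles puts `ζ` and `θ` within `arcsin α + arccos α = π / 2` of each
other, so `⟪ζ, θ⟫ > 0`. Since `⟪ζ, θ⟫` and `⟪-ζ, θ⟫` cannot both be positive, one of the two
intersections is empty.
-/

open MeasureTheory Metric Filter Set
open scoped RealInnerProductSpace

/-- The one-sided open cone `X⁺(x,θ,α) = {y : (y-x)·θ > (1-α²)^{1/2}|y-x|}`. -/
def oneSidedCone {n : ℕ} (x θ : EuclideanSpace ℝ (Fin n)) (α : ℝ) :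
    Set (EuclideanSpace ℝ (Fin n)) :=
  {y | Real.sqrt (1 - α ^ 2) * ‖y - x‖ < ⟪y - x, θ⟫}

open InnerProductGeometry Real

section
variable {V : Type*} [NormedAddCommGroup V] [InnerProductSpace ℝ V]

lemma angle_lt_arccos_of_mul_norm_lt_inner {u v : V} {c : ℝ} (hc : -1 ≤ c)
    (h : c * (‖u‖ * ‖v‖) < ⟪u, v⟫) : angle u v < arccos c := by
  have hu : u ≠ 0 := by rintro rfl; simp at h
  have hv : v ≠ 0 := by rintro rfl; simp at h
  have hnorm : 0 < ‖u‖ * ‖v‖ := by positivity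
  exact arccos_lt_arccos hc ((lt_div_iff₀ hnorm).2 h)
    (abs_le.1 (abs_real_inner_div_norm_mul_norm_le_one u v)).2

lemma inner_pos_of_angle_lt_pi_div_two {u v : V} (h : angle u v < π / 2) : 0 < ⟪u, v⟫ := by
  rw [angle, arccos_lt_pi_div_two, div_pos_iff] at h
  rcases h with ⟨hpos, -⟩ | ⟨-, hneg⟩
  · exact hpos
  · exact absurd hneg (mul_nonneg (norm_nonneg u) (norm_nonneg v)).not_gt

lemma inner_pos_of_sqrt_mul_norm_lt_inner_of_mul_norm_lt_inner {u ζ θ : V} {α : ℝ}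
    (hζ : ‖ζ‖ = 1) (hθ : ‖θ‖ = 1) (hα : 0 ≤ α)
    (hcone : √(1 - α ^ 2) * ‖u‖ < ⟪u, ζ⟫) (hhalf : α * ‖u‖ < ⟪u, θ⟫) : 0 < ⟪ζ, θ⟫ := by
  have hζu : angle ζ u < arcsin α := by
    rw [angle_comm, arcsin_eq_arccos hα]
    exact angle_lt_arccos_of_mul_norm_lt_inner (by linarith [sqrt_nonneg (1 - α ^ 2)])
      (by rwa [hζ, mul_one])
  have huθ : angle u θ < arccos α :=
    angle_lt_arccos_of_mul_norm_lt_inner (by linarith) (by rwa [hθ, mul_one])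
  apply inner_pos_of_angle_lt_pi_div_two
  calc angle ζ θ ≤ angle ζ u + angle u θ := angle_le_angle_add_angle ζ u θ
    _ < arcsin α + arccos α := add_lt_add hζu huθ
    _ = π / 2 := by rw [arccos_eq_pi_div_two_sub_arcsin]; ring
end

lemma oneSidedCone_inter_almostHalfSpace_eq_empty {n : ℕ} {x θ ζ : EuclideanSpace ℝ (Fin n)}
    {α : ℝ} (hθ : ‖θ‖ = 1) (hζ : ‖ζ‖ = 1) (hα : 0 ≤ α) (hζθ : ⟪ζ, θ⟫ ≤ 0) :
    oneSidedCone x ζ α ∩ almostHalfSpace x θ α = ∅ :=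
  eq_empty_of_forall_notMem fun _ ⟨hcone, hhalf⟩ =>
    hζθ.not_gt (inner_pos_of_sqrt_mul_norm_lt_inner_of_mul_norm_lt_inner hζ hθ hα hcone hhalf)

theorem stmt11_general (n : ℕ) (x θ ζ : EuclideanSpace ℝ (Fin n)) (r α : ℝ)
    (hθ : ‖θ‖ = 1) (hζ : ‖ζ‖ = 1) (hα0 : 0 < α) :
    (closedBall x r ∩ oneSidedCone x ζ α) ∩ almostHalfSpace x θ α = ∅ ∨
    (closedBall x r ∩ oneSidedCone x (-ζ) α) ∩ almostHalfSpace x θ α = ∅ := by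
  have hball : ∀ ξ, (closedBall x r ∩ oneSidedCone x ξ α) ∩ almostHalfSpace x θ α ⊆
      oneSidedCone x ξ α ∩ almostHalfSpace x θ α :=
    fun _ => inter_subset_inter_left _ inter_subset_right
  rcases le_or_gt ⟪ζ, θ⟫ 0 with hζθ | hζθ
  · exact .inl (subset_eq_empty (hball ζ)
      (oneSidedCone_inter_almostHalfSpace_eq_empty hθ hζ hα0.le hζθ))
  · refine .inr (subset_eq_empty (hball (-ζ))
      (oneSidedCone_inter_almostHalfSpace_eq_empty hθ (by rwa [norm_neg]) hα0.le ?_))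
    rw [inner_neg_left]
    linarith

theorem stmt11 (n : ℕ) (x θ ζ : EuclideanSpace ℝ (Fin n)) (r α : ℝ)
    (hθ : ‖θ‖ = 1) (hζ : ‖ζ‖ = 1) (hr : 0 < r) (hα0 : 0 < α) (hα1 : α ≤ 1) :
    (closedBall x r ∩ oneSidedCone x ζ α) ∩ almostHalfSpace x θ α = ∅ ∨
    (closedBall x r ∩ oneSidedCone x (-ζ) α) ∩ almostHalfSpace x θ α = ∅ :=
  stmt11_general n x θ ζ r α hθ hζ hα0
end
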